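/- Define h(n) := (6n²−27n+30 − √3·(2n−7)·√(2n²−7n+6)) / (6n²−27n+30 + √3·(2n−7)·√(2n²−7n+6)) for n ≥ 4. Then h is strictly decreasing for n ≥ 4, h(n) → 5−2√6 as n → ∞, and 5−2√6 > 0.1. -/
import Mathlib

open Real Filter

/-- The function `h(n)`. -/
noncomputable def h (n : ℕ) : ℝ :=
  (6 * (n : ℝ) ^ 2 - 27 * (n : ℝ) + 30 -
      Real.sqrt 3 * (2 * (n : ℝ) - 7) * Real.sqrt (2 * (n : ℝ) ^ 2 - 7 * (n : ℝ) + 6)) /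
    (6 * (n : ℝ) ^ 2 - 27 * (n : ℝ) + 30 +
      Real.sqrt 3 * (2 * (n : ℝ) - 7) * Real.sqrt (2 * (n : ℝ) ^ 2 - 7 * (n : ℝ) + 6))

set_option maxHeartbeats 1000000 in
lemma hstep' (x : ℝ) (hx : (4:ℝ) ≤ x) :
    (6 * (x+1) ^ 2 - 27 * (x+1) + 30 -
      Real.sqrt 3 * (2 * (x+1) - 7) * Real.sqrt (2 * (x+1) ^ 2 - 7 * (x+1) + 6)) /
    (6 * (x+1) ^ 2 - 27 * (x+1) + 30 +
      Real.sqrt 3 * (2 * (x+1) - 7) * Real.sqrt (2 * (x+1) ^ 2 - 7 * (x+1) + 6)) <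
    (6 * x ^ 2 - 27 * x + 30 -
      Real.sqrt 3 * (2 * x - 7) * Real.sqrt (2 * x ^ 2 - 7 * x + 6)) /
    (6 * x ^ 2 - 27 * x + 30 +
      Real.sqrt 3 * (2 * x - 7) * Real.sqrt (2 * x ^ 2 - 7 * x + 6)) := by
  have h4 : (0:ℝ) ≤ x - 4 := by linarith
  have hq1 : (0:ℝ) ≤ 2 * x ^ 2 - 7 * x + 6 := by nlinarith
  have hq2 : (0:ℝ) ≤ 2 * (x+1) ^ 2 - 7 * (x+1) + 6 := by nlinarith
  set s1 := Real.sqrt (2 * x ^ 2 - 7 * x + 6) with hs1def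
  set s2 := Real.sqrt (2 * (x+1) ^ 2 - 7 * (x+1) + 6) with hs2def
  set s3 := Real.sqrt 3 with hs3def
  have hs1 : s1^2 = 2 * x ^ 2 - 7 * x + 6 := Real.sq_sqrt hq1
  have hs2 : s2^2 = 2 * (x+1) ^ 2 - 7 * (x+1) + 6 := Real.sq_sqrt hq2
  have hs3 : s3^2 = 3 := Real.sq_sqrt (by norm_num)
  have hs1n : 0 ≤ s1 := Real.sqrt_nonneg _
  have hs2n : 0 ≤ s2 := Real.sqrt_nonneg _
  have hs3n : 0 ≤ s3 := Real.sqrt_nonneg _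
  have hb1n : 0 ≤ s3 * (2 * x - 7) * s1 :=
    mul_nonneg (mul_nonneg hs3n (by linarith)) hs1n
  have hb2n : 0 ≤ s3 * (2 * (x+1) - 7) * s2 :=
    mul_nonneg (mul_nonneg hs3n (by linarith)) hs2n
  have hb1lt : s3 * (2 * x - 7) * s1 < 6 * x ^ 2 - 27 * x + 30 := by
    apply lt_of_pow_lt_pow_left₀ 2 (by nlinarith)
    rw [mul_pow, mul_pow, hs1, hs3]
    nlinarith [pow_nonneg h4 2, pow_nonneg h4 3, pow_nonneg h4 4]
  have hb2lt : s3 * (2 * (x+1) - 7) * s2 < 6 * (x+1) ^ 2 - 27 * (x+1) + 30 := by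
    apply lt_of_pow_lt_pow_left₀ 2 (by nlinarith)
    rw [mul_pow, mul_pow, hs2, hs3]
    nlinarith [pow_nonneg h4 2, pow_nonneg h4 3, pow_nonneg h4 4]
  have hkey : (6 * (x+1) ^ 2 - 27 * (x+1) + 30) * (s3 * (2 * x - 7) * s1)
      < (6 * x ^ 2 - 27 * x + 30) * (s3 * (2 * (x+1) - 7) * s2) := by
    apply lt_of_pow_lt_pow_left₀ 2 (mul_nonneg (by nlinarith) hb2n)
    rw [mul_pow, mul_pow, mul_pow, mul_pow, mul_pow, mul_pow, hs1, hs2, hs3]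
    nlinarith [pow_nonneg h4 2, pow_nonneg h4 3, pow_nonneg h4 4,
      pow_nonneg h4 5, pow_nonneg h4 6, h4]
  rw [div_lt_div_iff₀ (by nlinarith) (by nlinarith)]
  nlinarith [hkey]

lemma hstep (n : ℕ) (hn : 4 ≤ n) : h (n + 1) < h n := by
  have hx : (4:ℝ) ≤ (n:ℝ) := by exact_mod_cast hn
  have := hstep' (n:ℝ) hx
  simp only [h]
  push_cast
  exact this

noncomputable def phi (x : ℝ) : ℝ :=
  (30 * x ^ 2 - 27 * x + 6 - Real.sqrt 3 * (2 - 7 * x) * Real.sqrt (6 * x ^ 2 - 7 * x + 2)) /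
    (30 * x ^ 2 - 27 * x + 6 + Real.sqrt 3 * (2 - 7 * x) * Real.sqrt (6 * x ^ 2 - 7 * x + 2))

lemma hphi_eq (n : ℕ) (hn : 4 ≤ n) : h n = phi ((n:ℝ)⁻¹) := by
  have hx : (4:ℝ) ≤ (n:ℝ) := by exact_mod_cast hn
  have hn0 : (0:ℝ) < (n:ℝ) := by linarith
  set y : ℝ := ((n:ℝ))⁻¹ with hy
  have hy0 : 0 < y := by positivity
  have hq : (0:ℝ) ≤ 2 * (n:ℝ) ^ 2 - 7 * (n:ℝ) + 6 := by nlinarith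
  have e1 : 30 * y ^ 2 - 27 * y + 6 = (6 * (n:ℝ) ^ 2 - 27 * (n:ℝ) + 30) * y ^ 2 := by
    rw [hy]; field_simp; ring
  have e2 : 2 - 7 * y = (2 * (n:ℝ) - 7) * y := by
    rw [hy]; field_simp
  have e3 : Real.sqrt (6 * y ^ 2 - 7 * y + 2) =
      Real.sqrt (2 * (n:ℝ) ^ 2 - 7 * (n:ℝ) + 6) * y := by
    have harg : 6 * y ^ 2 - 7 * y + 2 = (2 * (n:ℝ) ^ 2 - 7 * (n:ℝ) + 6) * y ^ 2 := by
      rw [hy]; field_simp; ring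
    rw [harg, Real.sqrt_mul hq, Real.sqrt_sq hy0.le]
  set A := 6 * (n:ℝ) ^ 2 - 27 * (n:ℝ) + 30 with hA
  set B := Real.sqrt 3 * (2 * (n:ℝ) - 7) * Real.sqrt (2 * (n:ℝ) ^ 2 - 7 * (n:ℝ) + 6) with hB
  have key : phi y = ((A - B) * y ^ 2) / ((A + B) * y ^ 2) := by
    unfold phi
    rw [e1, e2, e3, hA, hB]
    congr 1 <;> ring
  rw [key, mul_div_mul_right _ _ (by positivity : y ^ 2 ≠ 0)]
  simp only [h, hA, hB]

lemma hcont : ContinuousAt phi 0 := by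
  have hden : (30 * (0:ℝ) ^ 2 - 27 * 0 + 6 +
      Real.sqrt 3 * (2 - 7 * 0) * Real.sqrt (6 * (0:ℝ) ^ 2 - 7 * 0 + 2)) ≠ 0 := by
    have h1 : (0:ℝ) ≤ Real.sqrt 3 := Real.sqrt_nonneg 3
    have h2 : (0:ℝ) ≤ Real.sqrt (6 * (0:ℝ) ^ 2 - 7 * 0 + 2) := Real.sqrt_nonneg _
    nlinarith
  exact ContinuousAt.div (by fun_prop) (by fun_prop) hden

lemma hphi0 : phi 0 = 5 - 2 * Real.sqrt 6 := by
  have h32 : Real.sqrt 3 * Real.sqrt 2 = Real.sqrt 6 := by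
    rw [← Real.sqrt_mul (by norm_num : (0:ℝ) ≤ 3)]; norm_num
  have h6 : Real.sqrt 6 ^ 2 = 6 := Real.sq_sqrt (by norm_num)
  have h6nn : (0:ℝ) ≤ Real.sqrt 6 := Real.sqrt_nonneg 6
  have h6lt : Real.sqrt 6 < 3 := by nlinarith
  have h3nn : (0:ℝ) ≤ Real.sqrt 3 := Real.sqrt_nonneg 3
  have h2nn : (0:ℝ) ≤ Real.sqrt 2 := Real.sqrt_nonneg 2
  unfold phi
  norm_num
  rw [div_eq_iff (by nlinarith)]
  linear_combination (4 * Real.sqrt 6 - 12) * h32 + 4 * h6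

theorem stmt15 :
    StrictAntiOn h (Set.Ici 4) ∧
    Filter.Tendsto h Filter.atTop (nhds (5 - 2 * Real.sqrt 6)) ∧
    5 - 2 * Real.sqrt 6 > 0.1 := by
  refine ⟨?_, ?_, ?_⟩
  · have hg : StrictAnti (fun k : ℕ => h (k + 4)) :=
      strictAnti_nat_of_succ_lt (fun k => hstep (k + 4) (by omega))
    intro a ha b hb hab
    have ha' : 4 ≤ a := ha
    have hb' : 4 ≤ b := hb
    obtain ⟨c, rfl⟩ : ∃ c, a = c + 4 := ⟨a - 4, by omega⟩
    obtain ⟨d, rfl⟩ : ∃ d, b = d + 4 := ⟨b - 4, by omega⟩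
    exact hg (show c < d by omega)
  · have hlim : Tendsto (fun n : ℕ => phi ((n:ℝ)⁻¹)) atTop (nhds (phi 0)) :=
      hcont.tendsto.comp tendsto_inv_atTop_nhds_zero_nat
    rw [← hphi0]
    apply hlim.congr'
    filter_upwards [eventually_ge_atTop 4] with n hn
    exact (hphi_eq n hn).symm
  · have h6 : Real.sqrt 6 ^ 2 = 6 := Real.sq_sqrt (by norm_num)
    have h6nn : (0:ℝ) ≤ Real.sqrt 6 := Real.sqrt_nonneg 6
    norm_num
    nlinarith
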